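/- arXiv:2102.03591 — 7 statements merged into one kernel-verified Lean document; each statement's English description precedes it below -/
import Mathlib

section
/- Let R be a (not necessarily commutative) ring, let m ≥ 1, and let O₁, O₂, …, O_m ∈ R. For a nonempty subset I = {i₁ < i₂ < … < i_k} of {2, …, m}, let C_I denote the iterated commutator [[⋯[[O₁, O_{i₁}], O_{i₂}]⋯], O_{i_k}] (where [a,b] = ab − ba), and let P_I denote the product of the elements O_l for l ∈ {2,…,m} \ I, taken in increasing order of l (the empty product being 1). Then O₁O₂⋯O_m = (O₂O₃⋯O_m)·O₁ + Σ_{∅ ≠ I ⊆ {2,…,m}} P_I · C_I. -/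
/-!
Write `x * O a = ⁅x, O a⁆ + O a * x` and push `x` to the right through the product: each
factor `O l` is either passed over (and stays in the product) or absorbed into the iterated
commutator. Inducting on the smallest index gives, for any finite index set `s` in a linear
order and any `x`, the expansion `x * ∏_{l ∈ s} O l = ∑_{I ⊆ s} P_{s \ I} * C_I(x)`; the theorem
is the case `x = O 1`, `s = {2, …, m}`, with the term `I = ∅` split off.
-/

namespace Finset

variable {α R : Type*} [LinearOrder α] [Ring R]

theorem mul_prod_sort_eq_sum_powerset (O : α → R) (x : R) (s : Finset α) :
    x * ((s.sort (· ≤ ·)).map O).prod =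
      ∑ I ∈ s.powerset, (((s \ I).sort (· ≤ ·)).map O).prod *
        (I.sort (· ≤ ·)).foldl (fun acc i => ⁅acc, O i⁆) x := by
  induction s using Finset.induction_on_min generalizing x with
  | empty => simp
  | insert a s ha ih =>
    have ha' : a ∉ s := fun h => lt_irrefl a (ha a h)
    have hle : ∀ t ⊆ s, ∀ b ∈ t, a ≤ b := fun t ht b hb => (ha b (ht hb)).le
    have hskip : ∀ I ∈ s.powerset, insert a s \ I = insert a (s \ I) := fun I hI =>
      insert_sdiff_of_notMem _ fun h => ha' (mem_powerset.1 hI h)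
    have htake : ∀ I ∈ s.powerset, insert a s \ insert a I = s \ I := fun I _ => by
      rw [insert_sdiff_insert, sdiff_insert_of_notMem ha']
    calc x * ((insert a s).sort (· ≤ ·) |>.map O).prod
        = ⁅x, O a⁆ * ((s.sort (· ≤ ·)).map O).prod +
            O a * (x * ((s.sort (· ≤ ·)).map O).prod) := by
          rw [sort_insert _ (hle s subset_rfl) ha', List.map_cons, List.prod_cons, Ring.lie_def]
          noncomm_ring
      _ = _ := by
          rw [ih, ih, sum_powerset_insert ha', mul_sum, add_comm]
          congr 1 <;> refine sum_congr rfl fun I hI => ?_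
          · rw [hskip I hI, sort_insert _ (hle _ sdiff_subset) (fun h => ha' (mem_sdiff.1 h).1),
              List.map_cons, List.prod_cons, mul_assoc]
          · rw [htake I hI, sort_insert _ (hle I (mem_powerset.1 hI))
              (fun h => ha' (mem_powerset.1 hI h)), List.foldl_cons]

end Finset

theorem Nat.sort_Icc (a b : ℕ) : (Finset.Icc a b).sort (· ≤ ·) = List.range' a (b + 1 - a) := by
  rw [← (List.toFinset_sort _ List.nodup_range').2 List.pairwise_le_range', List.toFinset_range'_1]
  congr 1
  ext x
  simp only [Finset.mem_Icc, Finset.mem_Ico]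
  omega

theorem List.map_range_add_eq_map_range' {α : Type*} (f : ℕ → α) (a n : ℕ) :
    (List.range n).map (fun i => f (i + a)) = (List.range' a n).map f := by
  simp [List.range'_eq_map_range, add_comm]

/-- For elements `O 1, …, O m` of a ring, writing `[a,b] = a*b - b*a`,
`C_I` for the iterated commutator `[[⋯[[O 1, O i₁], O i₂]⋯], O i_k]` over the increasing
enumeration of a nonempty subset `I ⊆ {2,…,m}`, and `P_I` for the increasing-order product
of the `O l` with `l ∈ {2,…,m} \ I`, we have
`O 1 * O 2 * ⋯ * O m = (O 2 * ⋯ * O m) * O 1 + ∑_{∅ ≠ I ⊆ {2,…,m}} P_I * C_I`. -/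
theorem statement0 {R : Type*} [Ring R] (m : ℕ) (hm : 1 ≤ m) (O : ℕ → R) :
    ((List.range m).map (fun i => O (i + 1))).prod =
      ((List.range (m - 1)).map (fun i => O (i + 2))).prod * O 1 +
      ∑ I ∈ (Finset.Icc 2 m).powerset.filter (· ≠ ∅),
        ((((Finset.Icc 2 m) \ I).sort (· ≤ ·)).map O).prod *
          (I.sort (· ≤ ·)).foldl (fun acc i => acc * O i - O i * acc) (O 1) := by
  obtain ⟨n, rfl⟩ := Nat.exists_eq_add_of_le' hm
  have hsort : (Finset.Icc 2 (n + 1)).sort (· ≤ ·) = List.range' 2 n := by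
    simp [Nat.sort_Icc]
  rw [List.map_range_add_eq_map_range', List.map_range_add_eq_map_range', List.range'_succ,
    List.map_cons, List.prod_cons, Nat.add_sub_cancel, ← hsort,
    Finset.mul_prod_sort_eq_sum_powerset, Finset.filter_ne',
    ← Finset.add_sum_erase _ _ (Finset.empty_mem_powerset _)]
  simp [Ring.lie_def]
end

section
/- Let p, θ ∈ ℝ³ with ‖θ‖ < 4π, and set g = exp((1/2)(p·σ)) · exp(−(i/2)(θ·σ)), a 2×2 complex matrix. Let s ∈ ℝ and φ ∈ [0, π] satisfy 2·cosh(s + iφ) = tr(g). Then ‖p‖²/4 − s² + φ² ≥ 0, and equality holds if and only if exp(−(i/2)(θ·σ)) is the identity matrix (equivalently, θ = 0). -/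
open Matrix

/-- For `v ∈ ℝ³`, the matrix `v·σ = v₁σ₁ + v₂σ₂ + v₃σ₃` built from the Pauli matrices. -/
noncomputable def pauliDot (v : EuclideanSpace ℝ (Fin 3)) : Matrix (Fin 2) (Fin 2) ℂ :=
  (v 0 : ℂ) • !![0, 1; 1, 0] +
  (v 1 : ℂ) • !![0, -Complex.I; Complex.I, 0] +
  (v 2 : ℂ) • !![1, 0; 0, -1]

/-!
Both factors of `g` are exponentials of `μ (v·σ)` with `(v·σ)² = ‖v‖²`, so
`exp (μ (v·σ)) = cosh (μ‖v‖) + (sinh (μ‖v‖) / ‖v‖) (v·σ)`. The Pauli matrices are traceless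
with `tr ((v·σ)(w·σ)) = 2⟪v, w⟫`, so with `a = ‖p‖/2`, `b = ‖θ‖/2` the real and imaginary parts of
`2 cosh (s + iφ) = tr g` give `cosh s cos φ = cosh a cos b` and, by Cauchy–Schwarz,
`|sinh s sin φ| ≤ |sinh a sin b|`. Squaring and adding, `cosh² s - sin² φ ≤ cosh² a - sin² b`.
Since `cosh² t - t²` increases with `|t|` and `sin² φ < φ²` for `φ ≠ 0`, this forces
`s² ≤ a² + φ²`, with equality only if `φ = 0` and `cosh s = cosh a`, hence `cos b = 1`.
As `0 ≤ b < 2π`, both `cos b = 1` and `exp (-(i/2)(θ·σ)) = 1` (whose trace is `2 cos b`) mean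
`θ = 0`; and for `θ = 0` the equation is `cosh s cos φ = cosh a`, `sinh s sin φ = 0`, whose
solutions with `φ ∈ [0, π]` have `φ = 0`, `s = ±a`.
-/

open NormedSpace Complex

namespace NormedSpace

variable {A : Type*} [Ring A] [Algebra ℂ A] [TopologicalSpace A] [IsTopologicalRing A]
  [ContinuousSMul ℂ A] [T2Space A]

theorem exp_of_mul_self_eq_sq_smul_one {X : A} {z : ℂ} (hz : z ≠ 0)
    (hX : X * X = z ^ 2 • 1) : exp X = cosh z • 1 + (sinh z / z) • X := by
  have hpow (n : ℕ) : X ^ (2 * n) = (z ^ (2 * n)) • 1 := by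
    rw [pow_mul, sq, hX, smul_pow, one_pow, pow_mul]
  rw [exp_eq_tsum ℂ]
  refine HasSum.tsum_eq (HasSum.even_add_odd ?_ ?_)
  · convert (hasSum_cosh z).smul_const (1 : A) using 2 with n
    rw [hpow, smul_smul, div_eq_inv_mul]
  · convert ((hasSum_sinh z).div_const z).smul_const X using 2 with n
    rw [pow_succ, hpow, smul_mul_assoc, one_mul, smul_smul]
    congr 1
    field_simp
    ring

end NormedSpace

namespace Complex

theorem cosh_ofReal_add_ofReal_mul_I (s φ : ℝ) :
    cosh (s + φ * I) = (Real.cosh s * Real.cos φ : ℝ) + (Real.sinh s * Real.sin φ : ℝ) * I := by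
  rw [cosh_add, cosh_mul_I, sinh_mul_I]
  push_cast
  ring

theorem cosh_neg_I_div_two_mul_ofReal (x : ℝ) : cosh (-(I / 2) * x) = Real.cos (x / 2) := by
  rw [show -(I / 2) * x = ((-(x / 2) : ℝ) : ℂ) * I by push_cast; ring, cosh_mul_I, ← ofReal_cos,
    Real.cos_neg]

theorem sinh_neg_I_div_two_mul_ofReal (x : ℝ) : sinh (-(I / 2) * x) = -Real.sin (x / 2) * I := by
  rw [show -(I / 2) * x = ((-(x / 2) : ℝ) : ℂ) * I by push_cast; ring, sinh_mul_I, ← ofReal_sin,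
    Real.sin_neg, ofReal_neg]

end Complex

theorem pauliDot_eq (v : EuclideanSpace ℝ (Fin 3)) :
    pauliDot v = !![(v 2 : ℂ), v 0 - v 1 * I; v 0 + v 1 * I, -(v 2 : ℂ)] := by
  ext i j
  fin_cases i <;> fin_cases j <;> simp [pauliDot, sub_eq_add_neg, mul_comm]

@[simp]
theorem pauliDot_zero : pauliDot 0 = 0 := by
  simp [pauliDot]

@[simp]
theorem trace_pauliDot (v : EuclideanSpace ℝ (Fin 3)) : (pauliDot v).trace = 0 := by
  simp [pauliDot_eq, trace_fin_two]

theorem trace_pauliDot_mul_pauliDot (v w : EuclideanSpace ℝ (Fin 3)) :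
    (pauliDot v * pauliDot w).trace = 2 * (inner ℝ v w : ℝ) := by
  simp only [pauliDot_eq, mul_fin_two, trace_fin_two_of, PiLp.inner_apply, Fin.sum_univ_three,
    RCLike.inner_apply, conj_trivial]
  push_cast
  linear_combination (-2 * (v 1 : ℂ) * w 1) * I_sq

theorem pauliDot_mul_self (v : EuclideanSpace ℝ (Fin 3)) :
    pauliDot v * pauliDot v = ((‖v‖ : ℂ) ^ 2) • 1 := by
  have hnorm : (‖v‖ : ℂ) ^ 2 = (v 0 : ℂ) ^ 2 + (v 1 : ℂ) ^ 2 + (v 2 : ℂ) ^ 2 := by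
    rw [← ofReal_pow, EuclideanSpace.norm_sq_eq, Fin.sum_univ_three]
    simp
  rw [pauliDot_eq, mul_fin_two, hnorm, one_fin_two, smul_of]
  ext i j
  fin_cases i <;> fin_cases j <;> simp <;> ring_nf <;> simp only [I_sq] <;> ring

-- At `v = 0` the coefficient is the junk value `sinh 0 / 0 = 0`, harmless as `pauliDot 0 = 0`.
theorem exp_smul_pauliDot (μ : ℂ) (v : EuclideanSpace ℝ (Fin 3)) :
    exp (μ • pauliDot v) = cosh (μ * ‖v‖) • 1 + (sinh (μ * ‖v‖) / ‖v‖) • pauliDot v := by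
  by_cases hz : μ * ‖v‖ = 0
  · rcases mul_eq_zero.1 hz with hμ | hv
    · simp [hμ]
    · simp [norm_eq_zero.1 (ofReal_eq_zero.1 hv)]
  · have hsq : (μ • pauliDot v) * (μ • pauliDot v) = (μ * ‖v‖) ^ 2 • 1 := by
      rw [smul_mul_smul_comm, pauliDot_mul_self, smul_smul, mul_pow, sq μ]
    rw [exp_of_mul_self_eq_sq_smul_one hz hsq, smul_smul]
    congr 2
    have hμ : μ ≠ 0 := left_ne_zero_of_mul hz
    have hv : (‖v‖ : ℂ) ≠ 0 := right_ne_zero_of_mul hz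
    field_simp

theorem trace_exp_smul_pauliDot (μ : ℂ) (v : EuclideanSpace ℝ (Fin 3)) :
    (exp (μ • pauliDot v)).trace = 2 * cosh (μ * ‖v‖) := by
  simp [exp_smul_pauliDot, trace_add, trace_smul, mul_comm]

theorem trace_exp_smul_pauliDot_mul_exp_smul_pauliDot (μ ν : ℂ) (v w : EuclideanSpace ℝ (Fin 3)) :
    (exp (μ • pauliDot v) * exp (ν • pauliDot w)).trace =
      2 * cosh (μ * ‖v‖) * cosh (ν * ‖w‖) +
        2 * (sinh (μ * ‖v‖) / ‖v‖) * (sinh (ν * ‖w‖) / ‖w‖) * (inner ℝ v w : ℝ) := by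
  simp [exp_smul_pauliDot, add_mul, mul_add, trace_add, trace_smul,
    trace_pauliDot_mul_pauliDot]
  ring

theorem trace_exp_half_smul_pauliDot_mul_exp_neg_I_half_smul_pauliDot
    (p θ : EuclideanSpace ℝ (Fin 3)) :
    (exp ((1 / 2 : ℂ) • pauliDot p) * exp (-(I / 2) • pauliDot θ)).trace =
      2 * ((Real.cosh (‖p‖ / 2) * Real.cos (‖θ‖ / 2) : ℝ) +
        (-(Real.sinh (‖p‖ / 2) * Real.sin (‖θ‖ / 2)) * (inner ℝ p θ / (‖p‖ * ‖θ‖)) : ℝ) * I) := by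
  have hp : (1 / 2 : ℂ) * ‖p‖ = ((‖p‖ / 2 : ℝ) : ℂ) := by push_cast; ring
  rw [trace_exp_smul_pauliDot_mul_exp_smul_pauliDot, cosh_neg_I_div_two_mul_ofReal,
    sinh_neg_I_div_two_mul_ofReal, hp, ← ofReal_cosh, ← ofReal_sinh]
  push_cast
  ring

theorem cosh_mul_cos_eq_and_abs_sinh_mul_sin_le {p θ : EuclideanSpace ℝ (Fin 3)} {s φ : ℝ}
    (h : 2 * cosh ((s : ℂ) + (φ : ℂ) * I) =
      (exp ((1 / 2 : ℂ) • pauliDot p) * exp (-(I / 2) • pauliDot θ)).trace) :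
    Real.cosh s * Real.cos φ = Real.cosh (‖p‖ / 2) * Real.cos (‖θ‖ / 2) ∧
      |Real.sinh s * Real.sin φ| ≤ |Real.sinh (‖p‖ / 2) * Real.sin (‖θ‖ / 2)| := by
  rw [cosh_ofReal_add_ofReal_mul_I,
    trace_exp_half_smul_pauliDot_mul_exp_neg_I_half_smul_pauliDot] at h
  have hre := congrArg re h
  have him := congrArg im h
  simp only [mul_re, mul_im, add_re, add_im, ofReal_re, ofReal_im, I_re, I_im, re_ofNat,
    im_ofNat, mul_zero, zero_mul, mul_one, sub_zero, add_zero, zero_add] at hre him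
  refine ⟨by linarith, ?_⟩
  rw [show Real.sinh s * Real.sin φ = _ from mul_left_cancel₀ two_ne_zero him, abs_mul, abs_neg]
  exact mul_le_of_le_one_right (abs_nonneg _) (abs_real_inner_div_norm_mul_norm_le_one p θ)

namespace Real

theorem cosh_eq_cosh_iff_sq_eq {x y : ℝ} : cosh x = cosh y ↔ x ^ 2 = y ^ 2 := by
  rw [sq_eq_sq_iff_abs_eq_abs, le_antisymm_iff, le_antisymm_iff, cosh_le_cosh, cosh_le_cosh]

theorem cosh_sq_sub_sin_sq (x y : ℝ) :
    cosh x ^ 2 - sin y ^ 2 = (cosh x * cos y) ^ 2 + (sinh x * sin y) ^ 2 := by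
  linear_combination (-(cosh x ^ 2)) * sin_sq_add_cos_sq y + sin y ^ 2 * cosh_sq x

theorem cosh_sq_sub_sin_sq_le {s φ a b : ℝ} (h₁ : cosh s * cos φ = cosh a * cos b)
    (h₂ : |sinh s * sin φ| ≤ |sinh a * sin b|) :
    cosh s ^ 2 - sin φ ^ 2 ≤ cosh a ^ 2 - sin b ^ 2 := by
  rw [cosh_sq_sub_sin_sq, cosh_sq_sub_sin_sq, h₁]
  exact add_le_add le_rfl (sq_le_sq.2 h₂)

theorem sq_sub_sq_le_cosh_sq_sub_cosh_sq {a t : ℝ} (h : |a| ≤ t) :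
    t ^ 2 - a ^ 2 ≤ cosh t ^ 2 - cosh a ^ 2 := by
  obtain ⟨ha, ha'⟩ := abs_le.1 h
  have hsum : t + a ≤ sinh (t + a) := self_le_sinh_iff.2 (by linarith)
  have hdiff : t - a ≤ sinh (t - a) := self_le_sinh_iff.2 (by linarith)
  calc t ^ 2 - a ^ 2 = (t + a) * (t - a) := by ring
    _ ≤ sinh (t + a) * sinh (t - a) := mul_le_mul hsum hdiff (by linarith) (by linarith)
    _ = cosh t ^ 2 - cosh a ^ 2 := by
      rw [sinh_add, sinh_sub]
      linear_combination (sinh t ^ 2 + 1) * cosh_sq a - (sinh a ^ 2 + 1) * cosh_sq t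

theorem sq_le_sq_add_sq_of_cosh_sq_le {s a φ : ℝ} (h : cosh s ^ 2 ≤ cosh a ^ 2 + sin φ ^ 2) :
    s ^ 2 ≤ a ^ 2 + φ ^ 2 ∧ (s ^ 2 = a ^ 2 + φ ^ 2 → φ = 0) := by
  rcases le_or_gt (s ^ 2) (a ^ 2) with hs | hs
  · exact ⟨by nlinarith [sq_nonneg φ], fun he => pow_eq_zero_iff two_ne_zero |>.1 (by nlinarith)⟩
  · have hcosh := sq_sub_sq_le_cosh_sq_sub_cosh_sq (sq_lt_sq.1 hs).le
    rw [sq_abs, cosh_abs] at hcosh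
    refine ⟨by linarith [sin_sq_le_sq (x := φ)], fun he => ?_⟩
    by_contra hφ
    linarith [sin_sq_lt_sq hφ]

theorem eq_zero_and_sq_eq_of_cosh_mul_cos_eq_cosh {s a φ : ℝ} (hφ : φ ∈ Set.Icc 0 π)
    (h₁ : cosh s * cos φ = cosh a) (h₂ : sinh s * sin φ = 0) : φ = 0 ∧ s ^ 2 = a ^ 2 := by
  have hcos : cos φ = 1 := by
    rcases mul_eq_zero.1 h₂ with hs | hsin
    · rw [sinh_eq_zero.1 hs, cosh_zero, one_mul] at h₁
      linarith [one_le_cosh a, cos_le_one φ]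
    · have hpos : 0 < cos φ := pos_of_mul_pos_right (h₁ ▸ cosh_pos a) (cosh_pos s).le
      nlinarith [sin_sq_add_cos_sq φ]
  rw [hcos, mul_one, cosh_eq_cosh_iff_sq_eq] at h₁
  exact ⟨(cos_eq_one_iff_of_lt_of_lt (by linarith [hφ.1, pi_pos]) (by linarith [hφ.2, pi_pos])).1
    hcos, h₁⟩

end Real

theorem eq_zero_of_cos_half_norm_eq_one {θ : EuclideanSpace ℝ (Fin 3)} (hθ : ‖θ‖ < 4 * Real.pi)
    (h : Real.cos (‖θ‖ / 2) = 1) : θ = 0 := by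
  have := (Real.cos_eq_one_iff_of_lt_of_lt (by linarith [norm_nonneg θ, Real.pi_pos])
    (by linarith)).1 h
  exact norm_eq_zero.1 (by linarith)

theorem exp_neg_I_half_smul_pauliDot_eq_one_iff {θ : EuclideanSpace ℝ (Fin 3)}
    (hθ : ‖θ‖ < 4 * Real.pi) : exp (-(I / 2) • pauliDot θ) = 1 ↔ θ = 0 := by
  refine ⟨fun h => eq_zero_of_cos_half_norm_eq_one hθ ?_, fun h => by simp [h]⟩
  have htr := congrArg trace h
  rw [trace_exp_smul_pauliDot, cosh_neg_I_div_two_mul_ofReal, trace_one, Fintype.card_fin] at htr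
  exact_mod_cast mul_left_cancel₀ two_ne_zero (htr.trans (mul_one 2).symm)

/-- Let `p, θ ∈ ℝ³` with `‖θ‖ < 4π` and set
`g = exp((1/2)(p·σ)) * exp(−(i/2)(θ·σ))`.  If `s ∈ ℝ`, `φ ∈ [0, π]` satisfy
`2 cosh(s + iφ) = tr g`, then `‖p‖²/4 − s² + φ² ≥ 0`, with equality iff
`exp(−(i/2)(θ·σ))` is the identity matrix. -/
theorem statement1 (p θ : EuclideanSpace ℝ (Fin 3)) (hθ : ‖θ‖ < 4 * Real.pi)
    (s φ : ℝ) (hφ : φ ∈ Set.Icc 0 Real.pi)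
    (h : 2 * Complex.cosh ((s : ℂ) + (φ : ℂ) * Complex.I) =
      (NormedSpace.exp ((1/2 : ℂ) • pauliDot p) *
        NormedSpace.exp (-(Complex.I/2) • pauliDot θ)).trace) :
    0 ≤ ‖p‖^2 / 4 - s^2 + φ^2 ∧
      (‖p‖^2 / 4 - s^2 + φ^2 = 0 ↔
        NormedSpace.exp (-(Complex.I/2) • pauliDot θ) = 1) := by
  obtain ⟨hcos, hsin⟩ := cosh_mul_cos_eq_and_abs_sinh_mul_sin_le h
  have hp : ‖p‖ ^ 2 / 4 = (‖p‖ / 2) ^ 2 := by ring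
  have hkey : Real.cosh s ^ 2 ≤ Real.cosh (‖p‖ / 2) ^ 2 + Real.sin φ ^ 2 := by
    linarith [Real.cosh_sq_sub_sin_sq_le hcos hsin, sq_nonneg (Real.sin (‖θ‖ / 2))]
  obtain ⟨hle, hφ_eq_zero⟩ := Real.sq_le_sq_add_sq_of_cosh_sq_le hkey
  rw [exp_neg_I_half_smul_pauliDot_eq_one_iff hθ, hp]
  refine ⟨by linarith, fun heq => ?_, fun hθ0 => ?_⟩
  · obtain rfl := hφ_eq_zero (by linarith)
    have hs : Real.cosh s = Real.cosh (‖p‖ / 2) := Real.cosh_eq_cosh_iff_sq_eq.2 (by linarith)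
    rw [Real.cos_zero, mul_one, hs] at hcos
    exact eq_zero_of_cos_half_norm_eq_one hθ
      (mul_left_cancel₀ (Real.cosh_pos _).ne' (hcos.symm.trans (mul_one _).symm))
  · subst hθ0
    simp only [norm_zero, zero_div, Real.cos_zero, Real.sin_zero, mul_one, mul_zero, abs_zero,
      abs_nonpos_iff] at hcos hsin
    obtain ⟨rfl, hs⟩ := Real.eq_zero_and_sq_eq_of_cosh_mul_cos_eq_cosh hφ hcos hsin
    linarith
end

section
/- Define T : ℝ³ × ℝ³ × ℝ³ × ℝ³ → ℂ by T(p⁽¹⁾, θ⁽¹⁾, p⁽²⁾, θ⁽²⁾) = (1/2)·tr( exp(−(i/2)(θ⁽²⁾·σ)) · exp((i/2)(θ⁽¹⁾·σ)) · exp((1/2)(p⁽¹⁾·σ)) · exp((1/2)(p⁽²⁾·σ)) ). Then for all real p and θ, at the point p⁽¹⁾ = p⁽²⁾ = (0,0,p) and θ⁽¹⁾ = θ⁽²⁾ = (0,0,θ), the partial derivatives of T satisfy: ∂T/∂p⁽¹⁾ⱼ = ∂T/∂p⁽²⁾ⱼ = (1/2)·sinh(p) if j = 3 and 0 if j ∈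 {1,2}, and ∂T/∂θ⁽¹⁾ⱼ = −∂T/∂θ⁽²⁾ⱼ = (i/2)·sinh(p) if j = 3 and 0 if j ∈ {1,2}. -/
open Matrix

/-- The function
`T(p⁽¹⁾, θ⁽¹⁾, p⁽²⁾, θ⁽²⁾) = (1/2)·tr(exp(−(i/2)θ⁽²⁾·σ)·exp((i/2)θ⁽¹⁾·σ)·exp((1/2)p⁽¹⁾·σ)·exp((1/2)p⁽²⁾·σ))`. -/
noncomputable def Tfun (p₁ θ₁ p₂ θ₂ : EuclideanSpace ℝ (Fin 3)) : ℂ :=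
  (1/2 : ℂ) *
    (NormedSpace.exp (-(Complex.I/2) • pauliDot θ₂) *
      NormedSpace.exp ((Complex.I/2) • pauliDot θ₁) *
      NormedSpace.exp ((1/2 : ℂ) • pauliDot p₁) *
      NormedSpace.exp ((1/2 : ℂ) • pauliDot p₂)).trace

/-!
Conjugation by `σ₃` negates the first two coordinates in `v·σ` and does not change the trace,
so `T` is invariant under the rotation by `π` about the third axis applied to all four
arguments. Along `e₁` or `e₂` through the diagonal point this rotation reverses the
direction, so `s ↦ T` is even and its derivative at `0` vanishes. Along `e₃` all four
exponentials are diagonal and `T(a e₃, b e₃, c e₃, d e₃) = cosh ((a + c + i (b - d)) / 2)`.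
-/

open EuclideanSpace

lemma Function.Even.deriv_zero {F : Type*} [NormedAddCommGroup F] [NormedSpace ℝ F]
    {g : ℝ → F} (hg : Function.Even g) : deriv g 0 = 0 := by
  have h := deriv_comp_neg (f := g) (x := 0)
  rw [show (fun x => g (-x)) = g from funext hg, neg_zero] at h
  have h2 : (2 : ℝ) • deriv g 0 = 0 := by
    rw [two_smul]
    nth_rw 1 [h]
    exact neg_add_cancel _
  exact (smul_eq_zero.mp h2).resolve_left two_ne_zero

lemma hasDerivAt_ccosh_ofReal_mul_add (z w : ℂ) :
    HasDerivAt (fun s : ℝ => Complex.cosh (s * z + w)) (z * Complex.sinh w) 0 := by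
  have h : HasDerivAt (fun u : ℂ => Complex.cosh (u * z + w)) (z * Complex.sinh w)
      ((0 : ℝ) : ℂ) := by
    simpa [mul_comm] using (((hasDerivAt_id (0 : ℂ)).mul_const z).add_const w).ccosh
  exact h.comp_ofReal

lemma EuclideanSpace.single_add_smul_single_one {𝕜 ι : Type*} [RCLike 𝕜] [DecidableEq ι]
    (j : ι) (c s : 𝕜) : single j c + s • single j (1 : 𝕜) = single j (c + s) := by
  ext i
  by_cases h : i = j <;> simp [h]

local notation "M₂" => Matrix (Fin 2) (Fin 2) ℂ

noncomputable def pauliZ : M₂ˣ where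
  val := !![1, 0; 0, -1]
  inv := !![1, 0; 0, -1]
  val_inv := by simp [← Matrix.one_fin_two]
  inv_val := by simp [← Matrix.one_fin_two]

noncomputable def negXY (v : EuclideanSpace ℝ (Fin 3)) : EuclideanSpace ℝ (Fin 3) :=
  WithLp.toLp 2 ![-v 0, -v 1, v 2]

lemma pauliDot_negXY (v : EuclideanSpace ℝ (Fin 3)) :
    pauliDot (negXY v) = (pauliZ : M₂) * pauliDot v * (↑pauliZ⁻¹ : M₂) := by
  ext i j
  fin_cases i <;> fin_cases j <;>
    simp [pauliDot, negXY, pauliZ] <;> ring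

lemma exp_smul_pauliDot_negXY (z : ℂ) (v : EuclideanSpace ℝ (Fin 3)) :
    NormedSpace.exp (z • pauliDot (negXY v)) =
      (pauliZ : M₂) * NormedSpace.exp (z • pauliDot v) * (↑pauliZ⁻¹ : M₂) := by
  rw [pauliDot_negXY, ← Matrix.smul_mul, ← Matrix.mul_smul, Matrix.exp_units_conj]

lemma Tfun_negXY (a b c d : EuclideanSpace ℝ (Fin 3)) :
    Tfun (negXY a) (negXY b) (negXY c) (negXY d) = Tfun a b c d := by
  simp only [Tfun, exp_smul_pauliDot_negXY]
  conv_rhs => rw [← Matrix.trace_units_conj pauliZ]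
  simp only [mul_assoc, Units.inv_mul_cancel_left]

lemma negXY_single_two (c : ℝ) :
    negXY (single 2 c) = single 2 c := by
  ext i
  fin_cases i <;> simp [negXY]

lemma negXY_negXY (v : EuclideanSpace ℝ (Fin 3)) : negXY (negXY v) = v := by
  ext i
  fin_cases i <;> simp [negXY]

lemma negXY_single_two_add_smul_single {j : Fin 3} (hj : j ≠ 2) (c s : ℝ) :
    negXY (single 2 c + s • single j 1) =
      single 2 c + (-s) • single j 1 := by
  ext i
  fin_cases j <;> fin_cases i <;> simp_all [negXY]

lemma exp_smul_pauliDot_single_two (z : ℂ) (c : ℝ) :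
    NormedSpace.exp (z • pauliDot (single 2 c)) =
      Matrix.diagonal ![Complex.exp (z * c), Complex.exp (-(z * c))] := by
  have h : z • pauliDot (single 2 c) = Matrix.diagonal ![z * c, -(z * c)] := by
    ext i j
    fin_cases i <;> fin_cases j <;> simp [pauliDot]
  rw [h, Matrix.exp_diagonal]
  ext i j
  fin_cases i <;> fin_cases j <;> simp [← Complex.exp_eq_exp_ℂ]

lemma Tfun_single_two (a b c d : ℝ) :
    Tfun (single 2 a) (single 2 b) (single 2 c) (single 2 d) =
      Complex.cosh ((a + c + Complex.I * (b - d)) / 2) := by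
  simp only [Tfun, exp_smul_pauliDot_single_two, Matrix.diagonal_mul_diagonal,
    Matrix.trace_diagonal, Fin.sum_univ_two, Matrix.cons_val_zero, Matrix.cons_val_one,
    ← Complex.exp_add, Complex.cosh]
  ring_nf

lemma deriv_single_two_add_smul_single {F : EuclideanSpace ℝ (Fin 3) → ℂ}
    (x : ℝ) (z w : ℂ) (hF : ∀ v, F (negXY v) = F v)
    (hdiag : ∀ s : ℝ, F (single 2 (x + s)) = Complex.cosh (s * z + w))
    (j : Fin 3) :
    deriv (fun s : ℝ => F (single 2 x + s • single j 1)) 0 =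
      if j = 2 then z * Complex.sinh w else 0 := by
  split_ifs with hj
  · subst hj
    simp only [single_add_smul_single_one, hdiag]
    exact (hasDerivAt_ccosh_ofReal_mul_add z w).deriv
  · refine Function.Even.deriv_zero fun s => ?_
    rw [← hF, negXY_single_two_add_smul_single hj, neg_neg]

/-- At the point `p⁽¹⁾ = p⁽²⁾ = (0,0,p)`, `θ⁽¹⁾ = θ⁽²⁾ = (0,0,θ)`, the
partial derivatives of `T` are: `∂T/∂p⁽¹⁾ⱼ = ∂T/∂p⁽²⁾ⱼ = (1/2)sinh p` if `j = 3` and `0`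
otherwise, and `∂T/∂θ⁽¹⁾ⱼ = −∂T/∂θ⁽²⁾ⱼ = (i/2)sinh p` if `j = 3` and `0` otherwise. -/
theorem statement8 (p θ : ℝ) :
    (∀ j : Fin 3,
      deriv (fun s : ℝ =>
          Tfun (EuclideanSpace.single (2 : Fin 3) p + s • EuclideanSpace.single j (1 : ℝ))
            (EuclideanSpace.single (2 : Fin 3) θ)
            (EuclideanSpace.single (2 : Fin 3) p)
            (EuclideanSpace.single (2 : Fin 3) θ)) 0 =
        if j = 2 then ((Real.sinh p / 2 : ℝ) : ℂ) else 0) ∧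
    (∀ j : Fin 3,
      deriv (fun s : ℝ =>
          Tfun (EuclideanSpace.single (2 : Fin 3) p)
            (EuclideanSpace.single (2 : Fin 3) θ)
            (EuclideanSpace.single (2 : Fin 3) p + s • EuclideanSpace.single j (1 : ℝ))
            (EuclideanSpace.single (2 : Fin 3) θ)) 0 =
        if j = 2 then ((Real.sinh p / 2 : ℝ) : ℂ) else 0) ∧
    (∀ j : Fin 3,
      deriv (fun s : ℝ =>
          Tfun (EuclideanSpace.single (2 : Fin 3) p)
            (EuclideanSpace.single (2 : Fin 3) θ + s • EuclideanSpace.single j (1 : ℝ))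
            (EuclideanSpace.single (2 : Fin 3) p)
            (EuclideanSpace.single (2 : Fin 3) θ)) 0 =
        if j = 2 then (Complex.I / 2) * (Real.sinh p : ℂ) else 0) ∧
    (∀ j : Fin 3,
      deriv (fun s : ℝ =>
          Tfun (EuclideanSpace.single (2 : Fin 3) p)
            (EuclideanSpace.single (2 : Fin 3) θ)
            (EuclideanSpace.single (2 : Fin 3) p)
            (EuclideanSpace.single (2 : Fin 3) θ + s • EuclideanSpace.single j (1 : ℝ))) 0 =
        if j = 2 then -((Complex.I / 2) * (Real.sinh p : ℂ)) else 0) := by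

  refine ⟨fun j => ?_, fun j => ?_, fun j => ?_, fun j => ?_⟩
  · rw [deriv_single_two_add_smul_single (F := (Tfun · (single 2 θ) (single 2 p) (single 2 θ)))
      p (1 / 2) p
      (fun v => by rw [← Tfun_negXY]; simp only [negXY_negXY, negXY_single_two])
      (fun s => by rw [Tfun_single_two]; congr 1; push_cast; ring)]
    split_ifs <;> push_cast [Complex.ofReal_sinh] <;> ring
  · rw [deriv_single_two_add_smul_single (F := (Tfun (single 2 p) (single 2 θ) · (single 2 θ)))
      p (1 / 2) p
      (fun v => by rw [← Tfun_negXY]; simp only [negXY_negXY, negXY_single_two])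
      (fun s => by rw [Tfun_single_two]; congr 1; push_cast; ring)]
    split_ifs <;> push_cast [Complex.ofReal_sinh] <;> ring
  · rw [deriv_single_two_add_smul_single (F := (Tfun (single 2 p) · (single 2 p) (single 2 θ)))
      θ (Complex.I / 2) p
      (fun v => by rw [← Tfun_negXY]; simp only [negXY_negXY, negXY_single_two])
      (fun s => by rw [Tfun_single_two]; congr 1; push_cast; ring)]
    split_ifs <;> push_cast [Complex.ofReal_sinh] <;> ring
  · rw [deriv_single_two_add_smul_single (F := (Tfun (single 2 p) (single 2 θ) (single 2 p) ·))
      θ (-(Complex.I / 2)) p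
      (fun v => by rw [← Tfun_negXY]; simp only [negXY_negXY, negXY_single_two])
      (fun s => by rw [Tfun_single_two]; congr 1; push_cast; ring)]
    split_ifs <;> push_cast [Complex.ofReal_sinh] <;> ring
end

section
/- Let d ≥ 1 and k ≥ 1 be natural numbers and let A, B be d×d complex matrices with A invertible, B·A⁻¹·Bᵀ = 0, and Bᵀ·A⁻¹·B = 0. Let H be the (kd)×(kd) block-tridiagonal matrix with k diagonal blocks equal to A, with B in every block directly above the diagonal and Bᵀ in every block directly below the diagonal, and zero blocks elsewhere; that is, indexing blocks by i, j ∈ {1,…,k}, the (i,j) block of H equals A if i = j, equals B if j = i+1, equals Bᵀ if i = j+1, and is 0 otherwise. Then det(H) = (det A)ᵏ. -/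
open Matrix

/-!
Take the Schur complement of the last diagonal block. Deleting the last block row and column of
the `(k+1)`-block matrix leaves the `k`-block one; what remains of the last block column is a
single `B` (next to the diagonal), and of the last block row a single `C`. Their product through
`A⁻¹` has the single nonzero block `B A⁻¹ C = 0`, so the Schur complement is the `k`-block matrix
itself and `det H_{k+1} = det A · det H_k`.
-/

def finSuccProdEquiv (k : ℕ) (n : Type*) : (Fin k × n) ⊕ n ≃ Fin (k + 1) × n :=
  (Equiv.sumCongr (Equiv.refl _) (Equiv.uniqueProd n (Fin 1)).symm).trans
    ((Equiv.sumProdDistrib (Fin k) (Fin 1) n).symm.trans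
      (Equiv.prodCongr finSumFinEquiv (Equiv.refl _)))

@[simp] lemma finSuccProdEquiv_inl (k : ℕ) {n : Type*} (p : Fin k × n) :
    finSuccProdEquiv k n (Sum.inl p) = (p.1.castSucc, p.2) := rfl

@[simp] lemma finSuccProdEquiv_inr (k : ℕ) {n : Type*} (a : n) :
    finSuccProdEquiv k n (Sum.inr a) = (Fin.last k, a) := rfl

namespace Matrix

variable {α n : Type*}

def blockTridiagonal [Zero α] (k : ℕ) (A B C : Matrix n n α) :
    Matrix (Fin k × n) (Fin k × n) α :=
  fun p q =>
    if p.1 = q.1 then A p.2 q.2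
    else if (q.1 : ℕ) = p.1 + 1 then B p.2 q.2
    else if (p.1 : ℕ) = q.1 + 1 then C p.2 q.2
    else 0

def lastBlockCol [Zero α] (k : ℕ) (B : Matrix n n α) : Matrix (Fin k × n) n α :=
  of fun p b => if (p.1 : ℕ) + 1 = k then B p.2 b else 0

def lastBlockRow [Zero α] (k : ℕ) (C : Matrix n n α) : Matrix n (Fin k × n) α :=
  of fun a q => if (q.1 : ℕ) + 1 = k then C a q.2 else 0

lemma lastBlockCol_mul [Fintype n] [NonUnitalNonAssocSemiring α] (k : ℕ) (B M : Matrix n n α) :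
    lastBlockCol k B * M = lastBlockCol k (B * M) := by
  ext p c
  by_cases hp : (p.1 : ℕ) + 1 = k <;> simp [lastBlockCol, mul_apply, hp]

lemma lastBlockCol_mul_lastBlockRow_eq_zero [Fintype n] [NonUnitalNonAssocSemiring α] {k : ℕ}
    {B C : Matrix n n α} (h : B * C = 0) : lastBlockCol k B * lastBlockRow k C = 0 := by
  ext p q
  have hpq : (B * C) p.2 q.2 = 0 := by rw [h, zero_apply]
  by_cases hp : (p.1 : ℕ) + 1 = k <;> by_cases hq : (q.1 : ℕ) + 1 = k <;>
    simp_all [lastBlockCol, lastBlockRow, mul_apply]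

lemma blockTridiagonal_submatrix_finSuccProdEquiv [Zero α] (k : ℕ) (A B C : Matrix n n α) :
    (blockTridiagonal (k + 1) A B C).submatrix (finSuccProdEquiv k n) (finSuccProdEquiv k n) =
      fromBlocks (blockTridiagonal k A B C) (lastBlockCol k B) (lastBlockRow k C) A := by
  ext (p | a) (q | b) <;>
    simp only [blockTridiagonal, lastBlockCol, lastBlockRow, submatrix_apply, of_apply,
      finSuccProdEquiv_inl, finSuccProdEquiv_inr, fromBlocks_apply₁₁, fromBlocks_apply₁₂,
      fromBlocks_apply₂₁, fromBlocks_apply₂₂, Fin.ext_iff, Fin.val_castSucc, Fin.val_last] <;>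
    grind

variable [Fintype n] [DecidableEq n] [CommRing α] {A B C : Matrix n n α}

lemma det_blockTridiagonal_succ (hA : IsUnit A) (hBC : B * A⁻¹ * C = 0) (k : ℕ) :
    (blockTridiagonal (k + 1) A B C).det = A.det * (blockTridiagonal k A B C).det := by
  let := hA.invertible
  have hSchur : lastBlockCol k B * ⅟A * lastBlockRow k C = 0 := by
    rw [lastBlockCol_mul, invOf_eq_nonsing_inv, lastBlockCol_mul_lastBlockRow_eq_zero hBC]
  rw [← det_submatrix_equiv_self (finSuccProdEquiv k n),
    blockTridiagonal_submatrix_finSuccProdEquiv, det_fromBlocks₂₂, hSchur, sub_zero]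

lemma det_blockTridiagonal (hA : IsUnit A) (hBC : B * A⁻¹ * C = 0) (k : ℕ) :
    (blockTridiagonal k A B C).det = A.det ^ k := by
  induction k with
  | zero => rw [det_isEmpty, pow_zero]
  | succ k ih => rw [det_blockTridiagonal_succ hA hBC, ih, pow_succ']

end Matrix

theorem statement9_general (d k : ℕ)
    (A B : Matrix (Fin d) (Fin d) ℂ) (hA : IsUnit A)
    (h1 : B * A⁻¹ * Bᵀ = 0)
    (H : Matrix (Fin k × Fin d) (Fin k × Fin d) ℂ)
    (hH : ∀ (i j : Fin k) (a b : Fin d), H (i, a) (j, b) =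
      if i = j then A a b
      else if (j : ℕ) = (i : ℕ) + 1 then B a b
      else if (i : ℕ) = (j : ℕ) + 1 then Bᵀ a b
      else 0) :
    H.det = A.det ^ k := by
  have hH' : H = blockTridiagonal k A B Bᵀ := by
    ext ⟨i, a⟩ ⟨j, b⟩
    exact hH i j a b
  rw [hH', det_blockTridiagonal hA h1]

/-- Let `A, B` be `d×d` complex matrices with `A` invertible,
`B A⁻¹ Bᵀ = 0` and `Bᵀ A⁻¹ B = 0`.  If `H` is the `(kd)×(kd)` block-tridiagonal matrix
with diagonal blocks `A`, superdiagonal blocks `B`, subdiagonal blocks `Bᵀ` and zero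
blocks elsewhere, then `det H = (det A)ᵏ`. -/
theorem statement9 (d k : ℕ) (hd : 1 ≤ d) (hk : 1 ≤ k)
    (A B : Matrix (Fin d) (Fin d) ℂ) (hA : IsUnit A)
    (h1 : B * A⁻¹ * Bᵀ = 0) (h2 : Bᵀ * A⁻¹ * B = 0)
    (H : Matrix (Fin k × Fin d) (Fin k × Fin d) ℂ)
    (hH : ∀ (i j : Fin k) (a b : Fin d), H (i, a) (j, b) =
      if i = j then A a b
      else if (j : ℕ) = (i : ℕ) + 1 then B a b
      else if (i : ℕ) = (j : ℕ) + 1 then Bᵀ a b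
      else 0) :
    H.det = A.det ^ k :=
  statement9_general d k A B hA h1 H hH
end

section
/- Let d ≥ 1 and k ≥ 1 be natural numbers and let A, B be d×d complex matrices with A invertible, B·A⁻¹·Bᵀ = 0, and Bᵀ·A⁻¹·B = 0. Let H be the (kd)×(kd) block-tridiagonal matrix whose (i,j) block (i, j ∈ {1,…,k}) equals A if i = j, B if j = i+1, Bᵀ if i = j+1, and 0 otherwise. Define the (kd)×(kd) matrix M blockwise by: the (i,j) block of M equals A⁻¹ if i = j, equals (−1)^{j−i}·A⁻¹·(B·A⁻¹)^{j−i} if i < j, and equals (−1)^{i−j}·A⁻¹·(Bᵀ·A⁻¹)^{i−j} if i > j. Then H·M = I and M·H = I; in particular H is invertible with H⁻¹ = M. -/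
/-!
Viewed as `k × k` block matrices over the ring of `d × d` matrices, `H` and `M` are Toeplitz,
with symbols `t = A, B, Bᵀ` at `0, 1, -1` and `n m = A⁻¹ (-B A⁻¹) ^ m` for `m ≥ 0`,
`n m = A⁻¹ (-Bᵀ A⁻¹) ^ |m|` for `m < 0`. The convolution of `t` and `n` over `ℤ` is `δ₀`:
consecutive terms cancel, and every remaining cross term contains `B A⁻¹ Bᵀ` or `Bᵀ A⁻¹ B`.
Truncating the indices to `[0, k)` only drops terms `B * n m` with `m < 0` and `Bᵀ * n m`
with `m > 0` (resp. `n m * B`, `n m * Bᵀ`), which vanish for the same reason.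
-/

open Matrix

namespace Matrix

def toeplitz {R : Type*} {k : ℕ} (f : ℤ → R) : Matrix (Fin k) (Fin k) R :=
  of fun i j => f (j - i)

end Matrix

theorem Fin.sum_ite_intCast_eq {M : Type*} [AddCommMonoid M] {k : ℕ} (p : ℤ) (g : ℤ → M)
    (hg : p < 0 ∨ k ≤ p → g p = 0) :
    ∑ l : Fin k, (if (l : ℤ) = p then g l else 0) = g p := by
  by_cases hp : 0 ≤ p ∧ p < k
  · lift p to ℕ using hp.1
    rw [Fintype.sum_eq_single ⟨p, by omega⟩ fun l hl =>
      if_neg fun h => hl (Fin.ext (by simpa using h))]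
    simp
  · rw [hg (by omega)]
    exact Finset.sum_eq_zero fun l _ => if_neg (by have := l.isLt; omega)

section Ring

variable {R : Type*} [Ring R]

def tridiagCoeff (a b c : R) (m : ℤ) : R :=
  if m = 0 then a else if m = 1 then b else if m = -1 then c else 0

theorem tridiagCoeff_mul_eq (a b c x : R) (l i : ℤ) :
    tridiagCoeff a b c (l - i) * x = (if l = i then a * x else 0)
      + (if l = i + 1 then b * x else 0) + (if l = i - 1 then c * x else 0) := by
  unfold tridiagCoeff
  split_ifs <;> first | (exfalso; omega) | simp

theorem mul_tridiagCoeff_eq (a b c x : R) (l j : ℤ) :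
    x * tridiagCoeff a b c (j - l) = (if l = j then x * a else 0)
      + (if l = j - 1 then x * b else 0) + (if l = j + 1 then x * c else 0) := by
  unfold tridiagCoeff
  split_ifs <;> first | (exfalso; omega) | simp

variable {k : ℕ} (a b c : R)

theorem sum_tridiagCoeff_mul (g : ℤ → R) (i : Fin k) (hk : b * g k = 0) (h0 : c * g (-1) = 0) :
    ∑ l : Fin k, tridiagCoeff a b c (l - i) * g l = a * g i + b * g (i + 1) + c * g (i - 1) := by
  have hi := i.isLt
  simp only [tridiagCoeff_mul_eq, Finset.sum_add_distrib]
  rw [Fin.sum_ite_intCast_eq _ (a * g ·) (by omega),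
    Fin.sum_ite_intCast_eq _ (b * g ·) fun _ => by rwa [show (i : ℤ) + 1 = k by omega],
    Fin.sum_ite_intCast_eq _ (c * g ·) fun _ => by rwa [show (i : ℤ) - 1 = -1 by omega]]

theorem sum_mul_tridiagCoeff (g : ℤ → R) (j : Fin k) (h0 : g (-1) * b = 0) (hk : g k * c = 0) :
    ∑ l : Fin k, g l * tridiagCoeff a b c (j - l) = g j * a + g (j - 1) * b + g (j + 1) * c := by
  have hj := j.isLt
  simp only [mul_tridiagCoeff_eq, Finset.sum_add_distrib]
  rw [Fin.sum_ite_intCast_eq _ (g · * a) (by omega),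
    Fin.sum_ite_intCast_eq _ (g · * b) fun _ => by rwa [show (j : ℤ) - 1 = -1 by omega],
    Fin.sum_ite_intCast_eq _ (g · * c) fun _ => by rwa [show (j : ℤ) + 1 = k by omega]]

def tridiagInvCoeff (a' b c : R) (m : ℤ) : R :=
  if 0 ≤ m then a' * (-(b * a')) ^ m.natAbs else a' * (-(c * a')) ^ m.natAbs

variable {a b c} {a' : R}

theorem tridiagInvCoeff_natCast (q : ℕ) : tridiagInvCoeff a' b c q = a' * (-(b * a')) ^ q := by
  simp [tridiagInvCoeff]

theorem tridiagInvCoeff_neg_natCast (q : ℕ) :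
    tridiagInvCoeff a' b c (-q) = a' * (-(c * a')) ^ q := by
  rcases q.eq_zero_or_pos with rfl | hq
  · simp [tridiagInvCoeff]
  · simp [tridiagInvCoeff, hq.ne']

theorem mul_tridiagInvCoeff_of_neg (hbc : b * a' * c = 0) {m : ℤ} (hm : m < 0) :
    b * tridiagInvCoeff a' b c m = 0 := by
  obtain ⟨q, rfl⟩ := Int.eq_negSucc_of_lt_zero hm
  rw [Int.negSucc_eq, ← Nat.cast_succ, tridiagInvCoeff_neg_natCast, pow_succ']
  simp only [mul_neg, ← mul_assoc, hbc, zero_mul, neg_zero]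

theorem mul_tridiagInvCoeff_of_pos (hcb : c * a' * b = 0) {m : ℤ} (hm : 0 < m) :
    c * tridiagInvCoeff a' b c m = 0 := by
  obtain ⟨q, rfl⟩ := Int.eq_succ_of_zero_lt hm
  rw [← Nat.cast_succ, tridiagInvCoeff_natCast, pow_succ']
  simp only [mul_neg, ← mul_assoc, hcb, zero_mul, neg_zero]

theorem tridiagInvCoeff_mul_of_neg (hcb : c * a' * b = 0) {m : ℤ} (hm : m < 0) :
    tridiagInvCoeff a' b c m * b = 0 := by
  obtain ⟨q, rfl⟩ := Int.eq_negSucc_of_lt_zero hm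
  rw [Int.negSucc_eq, ← Nat.cast_succ, tridiagInvCoeff_neg_natCast, pow_succ]
  simp only [neg_mul, mul_neg, mul_assoc, hcb, mul_zero, neg_zero]

theorem tridiagInvCoeff_mul_of_pos (hbc : b * a' * c = 0) {m : ℤ} (hm : 0 < m) :
    tridiagInvCoeff a' b c m * c = 0 := by
  obtain ⟨q, rfl⟩ := Int.eq_succ_of_zero_lt hm
  rw [← Nat.cast_succ, tridiagInvCoeff_natCast, pow_succ]
  simp only [neg_mul, mul_neg, mul_assoc, hbc, mul_zero, neg_zero]

theorem mul_tridiagInvCoeff_recurrence (ha : a * a' = 1) (hbc : b * a' * c = 0)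
    (hcb : c * a' * b = 0) (m : ℤ) :
    a * tridiagInvCoeff a' b c m + b * tridiagInvCoeff a' b c (m - 1)
      + c * tridiagInvCoeff a' b c (m + 1) = if m = 0 then 1 else 0 := by
  rcases lt_trichotomy m 0 with hm | rfl | hm
  · obtain ⟨q, rfl⟩ := Int.eq_negSucc_of_lt_zero hm
    rw [Int.negSucc_eq, mul_tridiagInvCoeff_of_neg hbc (by omega), if_neg (by omega),
      show -((q : ℤ) + 1) + 1 = -q by ring, ← Nat.cast_succ, tridiagInvCoeff_neg_natCast,
      tridiagInvCoeff_neg_natCast, pow_succ']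
    simp only [← mul_assoc, ha, one_mul, neg_mul, add_zero, neg_add_cancel]
  · rw [mul_tridiagInvCoeff_of_neg hbc (by norm_num), mul_tridiagInvCoeff_of_pos hcb (by norm_num)]
    simp [tridiagInvCoeff, ha]
  · obtain ⟨q, rfl⟩ := Int.eq_succ_of_zero_lt hm
    rw [mul_tridiagInvCoeff_of_pos hcb (by omega), if_neg (by omega), add_sub_cancel_right,
      ← Nat.cast_succ, tridiagInvCoeff_natCast, tridiagInvCoeff_natCast, pow_succ']
    simp only [← mul_assoc, ha, one_mul, neg_mul, add_zero, neg_add_cancel]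

theorem tridiagInvCoeff_mul_recurrence (ha : a' * a = 1) (hbc : b * a' * c = 0)
    (hcb : c * a' * b = 0) (m : ℤ) :
    tridiagInvCoeff a' b c m * a + tridiagInvCoeff a' b c (m - 1) * b
      + tridiagInvCoeff a' b c (m + 1) * c = if m = 0 then 1 else 0 := by
  rcases lt_trichotomy m 0 with hm | rfl | hm
  · obtain ⟨q, rfl⟩ := Int.eq_negSucc_of_lt_zero hm
    rw [Int.negSucc_eq, tridiagInvCoeff_mul_of_neg hcb (by omega), if_neg (by omega),
      show -((q : ℤ) + 1) + 1 = -q by ring, ← Nat.cast_succ, tridiagInvCoeff_neg_natCast,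
      tridiagInvCoeff_neg_natCast, pow_succ]
    simp only [mul_assoc, ha, mul_one, neg_mul, mul_neg, add_zero, neg_add_cancel]
  · rw [tridiagInvCoeff_mul_of_neg hcb (by norm_num), tridiagInvCoeff_mul_of_pos hbc (by norm_num)]
    simp [tridiagInvCoeff, ha]
  · obtain ⟨q, rfl⟩ := Int.eq_succ_of_zero_lt hm
    rw [tridiagInvCoeff_mul_of_pos hbc (by omega), if_neg (by omega), add_sub_cancel_right,
      ← Nat.cast_succ, tridiagInvCoeff_natCast, tridiagInvCoeff_natCast, pow_succ]
    simp only [mul_assoc, ha, mul_one, neg_mul, mul_neg, add_zero, neg_add_cancel]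

end Ring

namespace Matrix

variable {R : Type*} [Ring R] {k : ℕ} {a a' b c : R}

theorem toeplitz_tridiagCoeff_mul_toeplitz_tridiagInvCoeff (ha : a * a' = 1)
    (hbc : b * a' * c = 0) (hcb : c * a' * b = 0) :
    toeplitz (tridiagCoeff a b c) * toeplitz (tridiagInvCoeff a' b c) =
      (1 : Matrix (Fin k) (Fin k) R) := by
  ext i j
  have hj := j.isLt
  simp only [mul_apply, toeplitz, of_apply]
  rw [sum_tridiagCoeff_mul a b c (fun l => tridiagInvCoeff a' b c (j - l)) i
      (mul_tridiagInvCoeff_of_neg hbc (by omega)) (mul_tridiagInvCoeff_of_pos hcb (by omega)),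
    show (j : ℤ) - (i + 1) = j - i - 1 by ring, show (j : ℤ) - (i - 1) = j - i + 1 by ring,
    mul_tridiagInvCoeff_recurrence ha hbc hcb, one_apply]
  exact if_congr (by rw [Fin.ext_iff]; omega) rfl rfl

theorem toeplitz_tridiagInvCoeff_mul_toeplitz_tridiagCoeff (ha : a' * a = 1)
    (hbc : b * a' * c = 0) (hcb : c * a' * b = 0) :
    toeplitz (tridiagInvCoeff a' b c) * toeplitz (tridiagCoeff a b c) =
      (1 : Matrix (Fin k) (Fin k) R) := by
  ext i j
  have hi := i.isLt
  simp only [mul_apply, toeplitz, of_apply]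
  rw [sum_mul_tridiagCoeff a b c (fun l => tridiagInvCoeff a' b c (l - i)) j
      (tridiagInvCoeff_mul_of_neg hcb (by omega)) (tridiagInvCoeff_mul_of_pos hbc (by omega)),
    show (j : ℤ) - 1 - i = j - i - 1 by ring, show (j : ℤ) + 1 - i = j - i + 1 by ring,
    tridiagInvCoeff_mul_recurrence ha hbc hcb, one_apply]
  exact if_congr (by rw [Fin.ext_iff]; omega) rfl rfl

theorem mul_neg_pow_apply {n S : Type*} [Fintype n] [DecidableEq n] [CommRing S]
    (Y X : Matrix n n S) (p : ℕ) (a b : n) :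
    (Y * (-X) ^ p) a b = (-1) ^ p * (Y * X ^ p) a b := by
  rw [← neg_one_smul S X, smul_pow, mul_smul_comm, smul_apply, smul_eq_mul]

end Matrix

theorem statement10_general (d k : ℕ)
    (A B : Matrix (Fin d) (Fin d) ℂ) (hA : IsUnit A)
    (h1 : B * A⁻¹ * Bᵀ = 0) (h2 : Bᵀ * A⁻¹ * B = 0)
    (H M : Matrix (Fin k × Fin d) (Fin k × Fin d) ℂ)
    (hH : ∀ (i j : Fin k) (a b : Fin d), H (i, a) (j, b) =
      if i = j then A a b
      else if (j : ℕ) = (i : ℕ) + 1 then B a b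
      else if (i : ℕ) = (j : ℕ) + 1 then Bᵀ a b
      else 0)
    (hM : ∀ (i j : Fin k) (a b : Fin d), M (i, a) (j, b) =
      if i = j then A⁻¹ a b
      else if (i : ℕ) < (j : ℕ) then
        (-1 : ℂ) ^ ((j : ℕ) - (i : ℕ)) * (A⁻¹ * (B * A⁻¹) ^ ((j : ℕ) - (i : ℕ))) a b
      else
        (-1 : ℂ) ^ ((i : ℕ) - (j : ℕ)) * (A⁻¹ * (Bᵀ * A⁻¹) ^ ((i : ℕ) - (j : ℕ))) a b) :
    H * M = 1 ∧ M * H = 1 := by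
  have hdet := (isUnit_iff_isUnit_det A).mp hA
  have hH' : H = compRingEquiv (Fin k) (Fin d) ℂ (toeplitz (tridiagCoeff A B Bᵀ)) := by
    ext ⟨i, a⟩ ⟨j, b⟩
    simp only [hH, compRingEquiv_apply, comp_apply, toeplitz, of_apply, tridiagCoeff, Fin.ext_iff]
    split_ifs <;> first | rfl | omega
  have hM' : M = compRingEquiv (Fin k) (Fin d) ℂ (toeplitz (tridiagInvCoeff A⁻¹ B Bᵀ)) := by
    ext ⟨i, a⟩ ⟨j, b⟩
    simp only [hM, compRingEquiv_apply, comp_apply, toeplitz, of_apply]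
    rcases lt_trichotomy (i : ℕ) j with hij | hij | hij
    · rw [if_neg (Fin.ne_of_lt hij), if_pos hij, show (j : ℤ) - i = ((j - i : ℕ) : ℤ) by omega,
        tridiagInvCoeff_natCast, mul_neg_pow_apply]
    · obtain rfl := Fin.ext hij
      simp [tridiagInvCoeff]
    · rw [if_neg (Fin.ne_of_gt hij), if_neg (by omega),
        show (j : ℤ) - i = -((i - j : ℕ) : ℤ) by omega, tridiagInvCoeff_neg_natCast,
        mul_neg_pow_apply]
  rw [hH', hM', ← map_mul, ← map_mul, toeplitz_tridiagCoeff_mul_toeplitz_tridiagInvCoeff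
      (mul_nonsing_inv A hdet) h1 h2,
    toeplitz_tridiagInvCoeff_mul_toeplitz_tridiagCoeff (nonsing_inv_mul A hdet) h1 h2, map_one]
  exact ⟨rfl, rfl⟩

/-- Let `A, B` be `d×d` complex matrices with `A` invertible,
`B A⁻¹ Bᵀ = 0` and `Bᵀ A⁻¹ B = 0`.  Let `H` be the block-tridiagonal matrix with diagonal
blocks `A`, superdiagonal blocks `B` and subdiagonal blocks `Bᵀ`, and let `M` be the block
matrix whose `(i,j)` block is `A⁻¹` for `i = j`, `(−1)^(j−i) A⁻¹ (B A⁻¹)^(j−i)` for `i < j`,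
and `(−1)^(i−j) A⁻¹ (Bᵀ A⁻¹)^(i−j)` for `i > j`.  Then `H M = 1` and `M H = 1`. -/
theorem statement10 (d k : ℕ) (hd : 1 ≤ d) (hk : 1 ≤ k)
    (A B : Matrix (Fin d) (Fin d) ℂ) (hA : IsUnit A)
    (h1 : B * A⁻¹ * Bᵀ = 0) (h2 : Bᵀ * A⁻¹ * B = 0)
    (H M : Matrix (Fin k × Fin d) (Fin k × Fin d) ℂ)
    (hH : ∀ (i j : Fin k) (a b : Fin d), H (i, a) (j, b) =
      if i = j then A a b
      else if (j : ℕ) = (i : ℕ) + 1 then B a b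
      else if (i : ℕ) = (j : ℕ) + 1 then Bᵀ a b
      else 0)
    (hM : ∀ (i j : Fin k) (a b : Fin d), M (i, a) (j, b) =
      if i = j then A⁻¹ a b
      else if (i : ℕ) < (j : ℕ) then
        (-1 : ℂ) ^ ((j : ℕ) - (i : ℕ)) * (A⁻¹ * (B * A⁻¹) ^ ((j : ℕ) - (i : ℕ))) a b
      else
        (-1 : ℂ) ^ ((i : ℕ) - (j : ℕ)) * (A⁻¹ * (Bᵀ * A⁻¹) ^ ((i : ℕ) - (j : ℕ))) a b) :
    H * M = 1 ∧ M * H = 1 :=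
  statement10_general d k A B hA h1 h2 H M hH hM
end

section
/- Let n ≥ 1 be an integer, let m ∈ ℕ, and let f₀, f₁, …, f_m ∈ ℝ[X] be polynomials. For x ∈ ℝ let F_x : ℝ → ℝ denote the function F_x(η) = sinh(xη)/sinh(η) (defined for η ≠ 0). Suppose the one-variable polynomial Σ_{j=0}^{m} f_j(n)·Yʲ ∈ ℝ[Y] is divisible by ∏_{l=0}^{n−1} (Y + 2l − (n−1)). Then for every real η with η ≠ 0, the function x ↦ (1/(x−n))·Σ_{j=0}^{m} f_j(x) · (∂_η)ʲ F_x(η) converges to a finite limit as x → n through values x ≠ n; that is, x = n is a removable singularity of this function of x. -/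
open Polynomial Filter Topology


noncomputable def Saux (k : ℕ) (t : ℝ) : ℝ :=
  ((1 + (-1:ℝ)^k)/2) * Real.sinh t + ((1 - (-1:ℝ)^k)/2) * Real.cosh t

lemma Saux_zero (t : ℝ) : Saux 0 t = Real.sinh t := by simp [Saux]

lemma Saux_hasDerivAt (k : ℕ) (t : ℝ) : HasDerivAt (Saux k) (Saux (k+1) t) t := by
  have h := (((Real.hasDerivAt_sinh t).const_mul ((1 + (-1:ℝ)^k)/2)).add
      ((Real.hasDerivAt_cosh t).const_mul ((1 - (-1:ℝ)^k)/2)))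
  refine h.congr_deriv ?_
  simp only [Saux, pow_succ]
  ring

noncomputable def Hf (i : ℕ) : ℝ → ℝ := iteratedDeriv i (fun t => (Real.sinh t)⁻¹)

lemma Hf_contDiffOn (i : ℕ) : ContDiffOn ℝ (⊤ : ℕ∞) (Hf i) {(0:ℝ)}ᶜ := by
  induction i with
  | zero =>
      simp only [Hf, iteratedDeriv_zero]
      exact ContDiffOn.inv (Real.contDiff_sinh.contDiffOn)
        (fun t ht => by
          simpa [Real.sinh_eq_zero] using ht)
  | succ i ih =>
      have : Hf (i+1) = deriv (Hf i) := by
        simp [Hf, iteratedDeriv_succ]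
      rw [this]
      exact ih.deriv_of_isOpen isOpen_compl_singleton (by simp)

lemma Hf_hasDerivAt (i : ℕ) {t : ℝ} (ht : t ≠ 0) : HasDerivAt (Hf i) (Hf (i+1) t) t := by
  have hd : DifferentiableAt ℝ (Hf i) t :=
    ((Hf_contDiffOn i).contDiffAt (isOpen_compl_singleton.mem_nhds ht)).differentiableAt (by simp)
  have := hd.hasDerivAt
  have he : Hf (i+1) t = deriv (Hf i) t := by simp [Hf, iteratedDeriv_succ]
  rw [he]; exact this

lemma leib (x : ℝ) (j : ℕ) : ∀ η : ℝ, η ≠ 0 →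
    iteratedDeriv j (fun t => Real.sinh (x * t) / Real.sinh t) η
      = ∑ k ∈ Finset.range (j+1),
          ((j.choose k : ℝ)) * (x^k * Saux k (x*η) * Hf (j-k) η) := by
  induction j with
  | zero =>
      intro η hη
      simp [Saux_zero, Hf, iteratedDeriv_zero, div_eq_mul_inv]
  | succ j ih =>
      intro η hη
      rw [iteratedDeriv_succ]
      have heq : (iteratedDeriv j (fun t => Real.sinh (x * t) / Real.sinh t))
          =ᶠ[𝓝 η] (fun t => ∑ k ∈ Finset.range (j+1),
            ((j.choose k : ℝ)) * (x^k * Saux k (x*t) * Hf (j-k) t)) := by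
        filter_upwards [isOpen_compl_singleton.mem_nhds (by simpa using hη)] with t ht
        exact ih t (by simpa using ht)
      rw [heq.deriv_eq]
      have hterm : ∀ k ∈ Finset.range (j+1), HasDerivAt
          (fun t => ((j.choose k : ℝ)) * (x^k * Saux k (x*t) * Hf (j-k) t))
          (((j.choose k : ℝ)) * (x^(k+1) * Saux (k+1) (x*η) * Hf (j-k) η
            + x^k * Saux k (x*η) * Hf (j-k+1) η)) η := by
        intro k hk
        have h1 : HasDerivAt (fun t => Saux k (x*t)) (x * Saux (k+1) (x*η)) η := by
          have := (Saux_hasDerivAt k (x*η)).comp η ((hasDerivAt_id η).const_mul x)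
          simpa [Function.comp_def, mul_comm] using this
        have h2 := Hf_hasDerivAt (j-k) hη
        have := ((h1.const_mul (x^k)).mul h2).const_mul ((j.choose k : ℝ))
        refine this.congr_deriv ?_
        ring
      have hsum := HasDerivAt.fun_sum hterm
      rw [hsum.deriv]
      -- now the combinatorial identity
      have hre : ∀ k ∈ Finset.range (j+1), ((j.choose k : ℝ)) *
          (x^(k+1) * Saux (k+1) (x*η) * Hf (j-k) η + x^k * Saux k (x*η) * Hf (j-k+1) η)
          = (j.choose k : ℝ) * (x^k * Saux k (x*η) * Hf (j+1-k) η)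
            + (j.choose k : ℝ) * (x^(k+1) * Saux (k+1) (x*η) * Hf (j-k) η) := by
        intro k hk
        have hk' : k ≤ j := Nat.lt_succ_iff.mp (Finset.mem_range.mp hk)
        rw [show j - k + 1 = j + 1 - k by omega]
        ring
      rw [Finset.sum_congr rfl hre, Finset.sum_add_distrib]
      have key := Finset.sum_choose_succ_mul
        (fun i jj => x^i * Saux i (x*η) * Hf jj η) j
      rw [key]


lemma geo (n : ℕ) (t : ℝ) :
    Real.sinh t * ∑ l ∈ Finset.range n, Real.exp ((2*(l:ℝ) - ((n:ℝ)-1)) * t)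
      = Real.sinh ((n:ℝ) * t) := by
  have h : ∀ c : ℝ, Real.sinh t * Real.exp (c * t)
      = (Real.exp ((c+1)*t) - Real.exp ((c-1)*t)) / 2 := by
    intro c
    have e1 : Real.exp ((c+1)*t) = Real.exp (c*t) * Real.exp t := by
      rw [← Real.exp_add]; ring_nf
    have e2 : Real.exp ((c-1)*t) = Real.exp (c*t) * Real.exp (-t) := by
      rw [← Real.exp_add]; ring_nf
    rw [Real.sinh_eq, e1, e2]; ring
  rw [Finset.mul_sum]
  have h2 : ∀ l ∈ Finset.range n,
      Real.sinh t * Real.exp ((2*(l:ℝ) - ((n:ℝ)-1)) * t)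
        = (Real.exp ((2*((l:ℝ)+1) - (n:ℝ)) * t) - Real.exp ((2*(l:ℝ) - (n:ℝ)) * t)) / 2 := by
    intro l _
    rw [h]
    ring_nf
  rw [Finset.sum_congr rfl h2, ← Finset.sum_div]
  have h3 := Finset.sum_range_sub (fun l : ℕ => Real.exp ((2*(l:ℝ) - (n:ℝ)) * t)) n
  have h4 : ∀ l ∈ Finset.range n,
      Real.exp ((2*((l:ℝ)+1) - (n:ℝ)) * t) - Real.exp ((2*(l:ℝ) - (n:ℝ)) * t)
        = Real.exp ((2*((l:ℕ)+1:ℕ) - (n:ℝ)) * t) - Real.exp ((2*(l:ℝ) - (n:ℝ)) * t) := by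
    intro l _; push_cast; ring_nf
  rw [Finset.sum_congr rfl h4, h3, Real.sinh_eq]
  ring_nf

lemma iterexp (n : ℕ) (j : ℕ) (c : ℕ → ℝ) : ∀ t : ℝ,
    iteratedDeriv j (fun s => ∑ l ∈ Finset.range n, Real.exp (c l * s)) t
      = ∑ l ∈ Finset.range n, (c l)^j * Real.exp (c l * t) := by
  induction j with
  | zero => intro t; simp
  | succ j ih =>
      intro t
      rw [iteratedDeriv_succ, funext ih]
      have : HasDerivAt (fun s => ∑ l ∈ Finset.range n, (c l)^j * Real.exp (c l * s))
          (∑ l ∈ Finset.range n, (c l)^(j+1) * Real.exp (c l * t)) t := by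
        apply HasDerivAt.fun_sum
        intro l _
        have h1 : HasDerivAt (fun s => Real.exp (c l * s)) (c l * Real.exp (c l * t)) t := by
          have := (Real.hasDerivAt_exp (c l * t)).comp t ((hasDerivAt_id t).const_mul (c l))
          simpa [Function.comp_def, mul_comm] using this
        have := h1.const_mul ((c l)^j)
        refine this.congr_deriv ?_
        ring
      exact this.deriv

/-- Let `n ≥ 1`, `m ∈ ℕ` and let `f₀, …, f_m ∈ ℝ[X]`.  For `x ∈ ℝ` let
`F_x(η) = sinh(xη)/sinh(η)`.  If the polynomial `Σ_{j=0}^{m} f_j(n)·Yʲ` is divisible by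
`∏_{l=0}^{n−1}(Y + 2l − (n−1))`, then for every `η ≠ 0` the function
`x ↦ (1/(x−n))·Σ_{j=0}^{m} f_j(x)·(∂_η)ʲF_x(η)` has a finite limit as `x → n`, `x ≠ n`. -/
theorem statement13 (n : ℕ) (hn : 1 ≤ n) (m : ℕ) (f : ℕ → Polynomial ℝ)
    (hdvd : (∏ l ∈ Finset.range n, (X + C (2 * (l : ℝ) - ((n : ℝ) - 1)))) ∣
      ∑ j ∈ Finset.range (m + 1), C ((f j).eval (n : ℝ)) * X ^ j) :
    ∀ η : ℝ, η ≠ 0 → ∃ L : ℝ,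
      Filter.Tendsto
        (fun x : ℝ => (1 / (x - (n : ℝ))) *
          ∑ j ∈ Finset.range (m + 1),
            (f j).eval x *
              iteratedDeriv j (fun η' : ℝ => Real.sinh (x * η') / Real.sinh η') η)
        (nhdsWithin (n : ℝ) {(n : ℝ)}ᶜ) (nhds L) := by
  intro η hη
  set c : ℕ → ℝ := fun l => 2*(l:ℝ) - ((n:ℝ)-1) with hc
  set g : ℝ → ℝ := fun x => ∑ j ∈ Finset.range (m + 1),
      (f j).eval x *
        iteratedDeriv j (fun η' : ℝ => Real.sinh (x * η') / Real.sinh η') η with hg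
  -- the explicit smooth formula
  have hgexp : g = fun x => ∑ j ∈ Finset.range (m + 1), (f j).eval x *
      ∑ k ∈ Finset.range (j+1), ((j.choose k : ℝ)) * (x^k * Saux k (x*η) * Hf (j-k) η) := by
    funext x
    exact Finset.sum_congr rfl fun j _ => by rw [leib x j η hη]
  -- differentiability
  have hdiff : DifferentiableAt ℝ g (n : ℝ) := by
    rw [hgexp]
    apply DifferentiableAt.fun_sum
    intro j _
    apply DifferentiableAt.mul ((f j).differentiable.differentiableAt)
    apply DifferentiableAt.fun_sum
    intro k _
    apply DifferentiableAt.const_mul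
    apply DifferentiableAt.mul_const
    apply DifferentiableAt.mul (differentiableAt_pow k)
    have : HasDerivAt (fun x : ℝ => Saux k (x*η)) (η * Saux (k+1) ((n:ℝ)*η)) (n:ℝ) := by
      have := (Saux_hasDerivAt k ((n:ℝ)*η)).comp (n:ℝ)
        ((hasDerivAt_id (n:ℝ)).mul_const η)
      simpa [Function.comp_def, mul_comm] using this
    exact this.differentiableAt
  -- value at n is zero
  have hval : g (n : ℝ) = 0 := by
    have hiter : ∀ j : ℕ,
        iteratedDeriv j (fun η' : ℝ => Real.sinh ((n:ℝ) * η') / Real.sinh η') η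
          = ∑ l ∈ Finset.range n, (c l)^j * Real.exp (c l * η) := by
      intro j
      have heq : (fun η' : ℝ => Real.sinh ((n:ℝ) * η') / Real.sinh η')
          =ᶠ[𝓝 η] (fun s => ∑ l ∈ Finset.range n, Real.exp (c l * s)) := by
        filter_upwards [isOpen_compl_singleton.mem_nhds (by simpa using hη)] with t ht
        have ht0 : Real.sinh t ≠ 0 := by
          simpa [Real.sinh_eq_zero] using ht
        rw [div_eq_iff ht0, hc]
        simp only []
        linear_combination -geo n t
      rw [heq.iteratedDeriv_eq j, iterexp n j c η]
    have hP : ∀ l ∈ Finset.range n,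
        (∑ j ∈ Finset.range (m + 1), C ((f j).eval (n : ℝ)) * X ^ j).eval (c l) = 0 := by
      intro l hl
      obtain ⟨Q, hQ⟩ := hdvd
      rw [hQ, eval_mul, eval_prod]
      have hmem : n - 1 - l ∈ Finset.range n := by
        simp only [Finset.mem_range] at hl ⊢; omega
      have hzero : (X + C (2 * ((n-1-l : ℕ) : ℝ) - ((n : ℝ) - 1))).eval (c l) = 0 := by
        simp only [Finset.mem_range] at hl
        have : ((n-1-l : ℕ) : ℝ) = (n:ℝ) - 1 - l := by
          push_cast [Nat.cast_sub (by omega : l ≤ n - 1), Nat.cast_sub (by omega : 1 ≤ n)]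
          ring
        simp [hc, this]
        ring
      rw [Finset.prod_eq_zero hmem hzero, zero_mul]
    rw [hg]
    simp only
    have : ∀ j ∈ Finset.range (m+1), (f j).eval ((n:ℝ)) *
        iteratedDeriv j (fun η' : ℝ => Real.sinh ((n:ℝ) * η') / Real.sinh η') η
        = ∑ l ∈ Finset.range n, ((f j).eval (n:ℝ) * (c l)^j) * Real.exp (c l * η) := by
      intro j _
      rw [hiter j, Finset.mul_sum]
      exact Finset.sum_congr rfl fun l _ => by ring
    rw [Finset.sum_congr rfl this, Finset.sum_comm]
    apply Finset.sum_eq_zero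
    intro l hl
    rw [← Finset.sum_mul]
    have := hP l hl
    rw [eval_finset_sum] at this
    simp only [eval_mul, eval_C, eval_pow, eval_X] at this
    rw [this, zero_mul]
  -- conclude
  refine ⟨deriv g (n:ℝ), ?_⟩
  have hslope := hasDerivAt_iff_tendsto_slope.mp hdiff.hasDerivAt
  have hfun : (fun x : ℝ => (1 / (x - (n : ℝ))) * g x) = slope g (n:ℝ) := by
    funext x
    rw [slope_def_field, hval, sub_zero]
    ring
  exact hfun ▸ hslope
end

section
/- For every a > 0 and all b, η ∈ ℝ, ∫_{−∞}^{∞} exp(−a·x² + b·x) · (sinh(η·x)/x) dx = √π · ∫_{(b−η)/(2√a)}^{(b+η)/(2√a)} exp(u²) du. (Equivalently, the left-hand side equals (π/2)·(erfi((b+η)/(2√a)) − erfi((b−η)/(2√a))), where erfi(z) = (2/√π)∫₀^z exp(u²) du.) -/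
/-!
Write `sinh (η x) / x = ½ ∫_{-η}^{η} e^{t x} dt` and exchange the order of integration (the
integrand is dominated by two Gaussians). The inner integral over `x` is a Gaussian with linear
term, `√(π/a) · e^{(b+t)²/(4a)}`, and the substitution `u = (b + t) / (2√a)` turns the remaining
integral over `t` into the right-hand side.
-/

open MeasureTheory Real Set

lemma exp_neg_mul_sq_add_mul {a : ℝ} (ha : a ≠ 0) (c x : ℝ) :
    exp (-a * x ^ 2 + c * x) = exp (c ^ 2 / (4 * a)) * exp (-a * (x - c / (2 * a)) ^ 2) := by
  rw [← exp_add]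
  congr 1
  field_simp
  ring

lemma integrable_exp_neg_mul_sq_add_mul {a : ℝ} (ha : 0 < a) (c : ℝ) :
    Integrable fun x : ℝ => exp (-a * x ^ 2 + c * x) := by
  simp_rw [exp_neg_mul_sq_add_mul ha.ne']
  exact ((integrable_exp_neg_mul_sq ha).comp_sub_right _).const_mul _

lemma integral_exp_neg_mul_sq_add_mul {a : ℝ} (ha : 0 < a) (c : ℝ) :
    ∫ x : ℝ, exp (-a * x ^ 2 + c * x) = √(π / a) * exp (c ^ 2 / (4 * a)) := by
  simp_rw [exp_neg_mul_sq_add_mul ha.ne', integral_const_mul,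
    integral_sub_right_eq_self (fun x => exp (-a * x ^ 2)), integral_gaussian, mul_comm]

lemma sinh_mul_div_eq_integral_exp (η : ℝ) {x : ℝ} (hx : x ≠ 0) :
    sinh (η * x) / x = 2⁻¹ * ∫ t in -η..η, exp (t * x) := by
  rw [intervalIntegral.integral_comp_mul_right exp hx, integral_exp, sinh_eq, smul_eq_mul, neg_mul]
  field_simp

lemma exp_mul_le_exp_add_exp_neg {t η : ℝ} (ht : |t| ≤ |η|) (x : ℝ) :
    exp (t * x) ≤ exp (η * x) + exp (-η * x) := by
  have hle : t * x ≤ |η * x| :=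
    calc t * x ≤ |t| * |x| := abs_mul t x ▸ le_abs_self _
      _ ≤ |η| * |x| := by gcongr
      _ = |η * x| := (abs_mul η x).symm
  rcases abs_choice (η * x) with h | h <;> rw [h] at hle
  · linarith [exp_le_exp.2 hle, exp_pos (-η * x)]
  · rw [← neg_mul] at hle
    linarith [exp_le_exp.2 hle, exp_pos (η * x)]

lemma abs_le_abs_of_mem_uIoc_neg {t η : ℝ} (ht : t ∈ uIoc (-η) η) : |t| ≤ |η| := by
  rcases mem_uIcc.1 (uIoc_subset_uIcc ht) with ⟨h₁, h₂⟩ | ⟨h₁, h₂⟩ <;>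
    rw [abs_le] <;> constructor <;> cases abs_cases η <;> linarith

lemma integrable_exp_neg_mul_sq_add_mul_prod {a : ℝ} (ha : 0 < a) (b η : ℝ) :
    Integrable (Function.uncurry fun t x : ℝ => exp (-a * x ^ 2 + (b + t) * x))
      ((volume.restrict (uIoc (-η) η)).prod volume) := by
  have hone : IntegrableOn (fun _ : ℝ => (1 : ℝ)) (uIoc (-η) η) :=
    continuous_const.integrableOn_uIoc
  have hdom := hone.mul_prod ((integrable_exp_neg_mul_sq_add_mul ha (b + η)).add
    (integrable_exp_neg_mul_sq_add_mul ha (b - η)))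
  refine hdom.mono' (by fun_prop) ?_
  filter_upwards [Measure.quasiMeasurePreserving_fst.ae (ae_restrict_mem measurableSet_uIoc)]
    with ⟨t, x⟩ ht
  have key := exp_mul_le_exp_add_exp_neg (abs_le_abs_of_mem_uIoc_neg ht) x
  have hsplit : ∀ s, exp (-a * x ^ 2 + (b + s) * x) = exp (-a * x ^ 2 + b * x) * exp (s * x) :=
    fun s => by rw [← exp_add]; ring_nf
  rw [Function.uncurry_apply_pair, norm_of_nonneg (exp_pos _).le, one_mul, Pi.add_apply,
    sub_eq_add_neg, hsplit, hsplit, hsplit, ← mul_add]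
  exact mul_le_mul_of_nonneg_left key (exp_pos _).le

lemma integral_exp_add_sq_div {a : ℝ} (ha : 0 < a) (b η : ℝ) :
    ∫ t in -η..η, exp ((b + t) ^ 2 / (4 * a)) =
      2 * √a * ∫ u in (b - η) / (2 * √a)..(b + η) / (2 * √a), exp (u ^ 2) := by
  have hsa : 0 < 2 * √a := by positivity
  have hsq : ∀ s, s ^ 2 / (4 * a) = (s / (2 * √a)) ^ 2 := fun s => by
    rw [div_pow, mul_pow, sq_sqrt ha.le]; norm_num
  simp_rw [hsq]
  rw [intervalIntegral.integral_comp_add_left (fun s => exp ((s / (2 * √a)) ^ 2)),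
    intervalIntegral.integral_comp_div (fun u => exp (u ^ 2)) hsa.ne', smul_eq_mul,
    ← sub_eq_add_neg]

/-- For `a > 0` and `b, η ∈ ℝ`:
`∫_{−∞}^{∞} e^{−ax² + bx}·(sinh(ηx)/x) dx = √π · ∫_{(b−η)/(2√a)}^{(b+η)/(2√a)} e^{u²} du`. -/
theorem statement15 (a b η : ℝ) (ha : 0 < a) :
    ∫ x : ℝ, Real.exp (-a * x^2 + b * x) * (Real.sinh (η * x) / x) =
      Real.sqrt Real.pi *
        ∫ u in (b - η) / (2 * Real.sqrt a)..(b + η) / (2 * Real.sqrt a), Real.exp (u^2) := by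
  have hsinh : ∀ᵐ x : ℝ, exp (-a * x ^ 2 + b * x) * (sinh (η * x) / x) =
      2⁻¹ * ∫ t in -η..η, exp (-a * x ^ 2 + (b + t) * x) := by
    filter_upwards [Measure.ae_ne volume 0] with x hx
    simp_rw [sinh_mul_div_eq_integral_exp η hx, mul_left_comm _ (2⁻¹ : ℝ),
      ← intervalIntegral.integral_const_mul, ← exp_add, add_mul, add_assoc]
  calc _ = 2⁻¹ * ∫ x, ∫ t in -η..η, exp (-a * x ^ 2 + (b + t) * x) := by
        rw [integral_congr_ae hsinh, integral_const_mul]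
    _ = 2⁻¹ * ∫ t in -η..η, √(π / a) * exp ((b + t) ^ 2 / (4 * a)) := by
        rw [← intervalIntegral_integral_swap (integrable_exp_neg_mul_sq_add_mul_prod ha b η)]
        simp_rw [integral_exp_neg_mul_sq_add_mul ha]
    _ = _ := by
        rw [intervalIntegral.integral_const_mul, integral_exp_add_sq_div ha, sqrt_div' _ ha.le]
        field_simp [(sqrt_pos.2 ha).ne']
end
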